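/- Let σ > 1, z₀ > 1 and 1 − z₀ ≤ w₀ < 0, and let z be a solution of the damped oscillator ODE with data (z₀, w₀). Then z(t) = z₀ + w₀(1 − e^{−t}) for all t ≥ 0; in particular z(t) ≥ 1 for all t ≥ 0, |z(t) − (z₀ + w₀)| = |w₀| e^{−t}, and z(t) converges exponentially as t → +∞ to the limit z₀ + w₀ ≥ 1. -/

import Mathlib

/-!
While `z > 1` the force `Φ_σ'(z)` vanishes, so `z'' + z' = 0`, i.e. `z' + z` is constant and
`z = z₀ + w₀ (1 - e^{-t})`. Since `w₀ < 0` and `z₀ + w₀ ≥ 1`, this free motion stays strictly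
above `1`, so `z` can never reach the level `1`: at the first time `τ` with `z τ ≤ 1` the
solution would coincide with the free motion on `[0, τ]`, which is `> 1` at `τ`.
-/

/-- The force `Φ_σ'` (derivative of the normalized adhesion potential with `u_* = 1`). -/
noncomputable def PhiD (σ u : ℝ) : ℝ :=
  if |u| ≤ 1 - 1/σ then 2*u
  else if 1 - 1/σ ≤ u ∧ u ≤ 1 then 2*(σ - 1)*(1 - u)
  else if -1 ≤ u ∧ u ≤ -1 + 1/σ then -(2*(σ - 1)*(1 + u))
  else 0

open Real Set

lemma PhiD_eq_zero_of_one_lt {σ u : ℝ} (hσ : 1 < σ) (hu : 1 < u) : PhiD σ u = 0 := by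
  have hσ' : 0 < 1 / σ := by positivity
  have hσ'' : 1 / σ < 1 := (div_lt_one (by positivity)).2 hσ
  have hle : u ≤ |u| := le_abs_self u
  unfold PhiD
  split_ifs with h₁ h₂ h₃
  · linarith
  · linarith [h₂.2]
  · linarith [h₃.2]
  · rfl

lemma eq_of_hasDerivAt_eq_zero_of_Ioo {f : ℝ → ℝ} {a b : ℝ} (hab : a ≤ b)
    (hf : ContinuousOn f (Icc a b)) (hf' : ∀ x ∈ Ioo a b, HasDerivAt f 0 x) : f b = f a := by
  rcases hab.eq_or_lt with rfl | hab
  · rfl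
  obtain ⟨c, -, hc⟩ := exists_hasDerivAt_eq_slope f (fun _ => 0) hab hf hf'
  rw [eq_comm, div_eq_zero_iff, sub_eq_zero, sub_eq_zero] at hc
  exact hc.resolve_right hab.ne'

lemma ContinuousOn.lt_of_forall_Ico_lt {f : ℝ → ℝ} {a b c : ℝ} (hf : ContinuousOn f (Icc a b))
    (hstep : ∀ t ∈ Icc a b, (∀ s ∈ Ico a t, c < f s) → c < f t) : ∀ t ∈ Icc a b, c < f t := by
  intro t ht
  by_contra! hle
  -- the first time the bound fails is the least element of a closed set
  set K := Icc a b ∩ f ⁻¹' Iic c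
  have hK : IsClosed K := hf.preimage_isClosed_of_isClosed isClosed_Icc isClosed_Iic
  have hKbdd : BddBelow K := ⟨a, fun x hx => hx.1.1⟩
  have hτ : sInf K ∈ K := hK.csInf_mem ⟨t, ht, hle⟩ hKbdd
  refine not_lt.2 hτ.2 (hstep _ hτ.1 fun s hs => ?_)
  by_contra! hs'
  exact hs.2.not_ge (csInf_le hKbdd ⟨⟨hs.1, hs.2.le.trans hτ.1.2⟩, hs'⟩)

lemma eq_of_deriv2_add_deriv_eq_zero {z z' z'' : ℝ → ℝ} {T : ℝ} (hT : 0 ≤ T)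
    (hz : ∀ t ∈ Icc 0 T, HasDerivAt z (z' t) t) (hz' : ∀ t ∈ Icc 0 T, HasDerivAt z' (z'' t) t)
    (hfree : ∀ t ∈ Ioo 0 T, z'' t + z' t = 0) :
    z T = z 0 + z' 0 * (1 - exp (-T)) := by
  have hcont : ContinuousOn z (Icc 0 T) := fun t ht => (hz t ht).continuousAt.continuousWithinAt
  have hcont' : ContinuousOn z' (Icc 0 T) :=
    fun t ht => (hz' t ht).continuousAt.continuousWithinAt
  set L := z' 0 + z 0
  have hsum : ∀ t ∈ Icc 0 T, z' t + z t = L := fun t ht =>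
    eq_of_hasDerivAt_eq_zero_of_Ioo ht.1 ((hcont'.add hcont).mono (Icc_subset_Icc_right ht.2))
      fun x hx =>
        have hx' : x ∈ Ioo 0 T := ⟨hx.1, hx.2.trans_le ht.2⟩
        ((hz' x (Ioo_subset_Icc_self hx')).add (hz x (Ioo_subset_Icc_self hx'))).congr_deriv
          (hfree x hx')
  have hexp : exp T * (z T - L) = exp 0 * (z 0 - L) := by
    refine eq_of_hasDerivAt_eq_zero_of_Ioo (f := fun t => exp t * (z t - L)) hT
      (continuous_exp.continuousOn.mul (hcont.sub continuousOn_const)) fun x hx => ?_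
    have hx' : x ∈ Icc 0 T := Ioo_subset_Icc_self hx
    refine ((hasDerivAt_exp x).mul ((hz x hx').sub_const L)).congr_deriv ?_
    linear_combination exp x * hsum x hx'
  rw [exp_zero, one_mul] at hexp
  rw [exp_neg]
  field_simp
  linear_combination hexp

theorem case_III (σ z₀ w₀ : ℝ) (hσ : 1 < σ)
    (hw₀l : 1 - z₀ ≤ w₀) (hw₀ : w₀ < 0)
    (z z' z'' : ℝ → ℝ)
    (hz : ∀ t ≥ (0:ℝ), HasDerivAt z (z' t) t)
    (hz' : ∀ t ≥ (0:ℝ), HasDerivAt z' (z'' t) t)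
    (hode : ∀ t > (0:ℝ), z'' t + z' t + PhiD σ (z t) = 0)
    (h0 : z 0 = z₀) (h0' : z' 0 = w₀) :
    (∀ t ≥ (0:ℝ), z t = z₀ + w₀ * (1 - Real.exp (-t)) ∧ 1 ≤ z t ∧
      |z t - (z₀ + w₀)| = |w₀| * Real.exp (-t)) ∧ 1 ≤ z₀ + w₀ := by
  have hfree_gt : ∀ t, 1 < z₀ + w₀ * (1 - exp (-t)) := fun t => by nlinarith [exp_pos (-t)]
  have hfree : ∀ t ≥ 0, (∀ s ∈ Ico 0 t, 1 < z s) → z t = z₀ + w₀ * (1 - exp (-t)) := by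
    intro t ht hgt
    rw [← h0, ← h0']
    refine eq_of_deriv2_add_deriv_eq_zero ht (fun s hs => hz s hs.1) (fun s hs => hz' s hs.1)
      fun s hs => ?_
    simpa [PhiD_eq_zero_of_one_lt hσ (hgt s (Ioo_subset_Ico_self hs))]
      using hode s hs.1
  have habove : ∀ t ≥ 0, 1 < z t := fun t ht =>
    ContinuousOn.lt_of_forall_Ico_lt (fun s hs => (hz s hs.1).continuousAt.continuousWithinAt)
      (fun s hs hgt => hfree s hs.1 hgt ▸ hfree_gt s) t ⟨ht, le_rfl⟩
  have hz_eq : ∀ t ≥ 0, z t = z₀ + w₀ * (1 - exp (-t)) :=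
    fun t ht => hfree t ht fun s hs => habove s hs.1
  refine ⟨fun t ht => ⟨hz_eq t ht, (habove t ht).le, ?_⟩, by linarith⟩
  rw [hz_eq t ht, show z₀ + w₀ * (1 - exp (-t)) - (z₀ + w₀) = -w₀ * exp (-t) by ring, abs_mul,
    abs_neg, abs_of_pos (exp_pos _)]
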